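/- arXiv:2301.07428 — 4 statements merged into one kernel-verified Lean document; each statement's English description precedes it below -/
import Mathlib

section
/- Let W be any subspace of the antisymmetric subspace H_as ⊂ ℂᵈ ⊗ ℂᵈ with dim W ≥ 1, and P_W the orthogonal projection onto W. Then the supremum over unit simple tensors x ⊗ y of ‖P_W(x⊗y)‖² equals exactly 1/2, provided W is spanned by antisymmetrized basis tensors (eᵢ ⊗ eⱼ − eⱼ ⊗ eᵢ)/√2 for pairs (i,j) in some nonempty index set. -/
/-! Every vector of the antisymmetric subspace is orthogonal to the symmetric tensors, so for
`W ≤ H_as` the projection of `x ⊗ y` onto `W` equals that of its antisymmetric part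
`(x ⊗ y - y ⊗ x) / 2`, whose squared norm is `(‖x‖²‖y‖² - |⟪x, y⟫|²) / 2 ≤ 1 / 2`.
The bound is attained at `h a ⊗ f b` for a generating pair `(a, b)` of `W`: its inner product
with the unit generator `(h a ⊗ f b - h b ⊗ f a) / √2` is `1 / √2`. -/

noncomputable section

/-- The simple tensor `x ⊗ y` of two vectors, realized in `EuclideanSpace ℂ (ι × κ)`. -/
def tens {ι κ : Type*} [Fintype ι] [Fintype κ] (x : EuclideanSpace ℂ ι) (y : EuclideanSpace ℂ κ) :
    EuclideanSpace ℂ (ι × κ) :=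
  WithLp.toLp 2 (fun p => x p.1 * y p.2)

/-- The antisymmetric subspace of `ℂᵈ ⊗ ℂᵈ`, spanned by `(eᵢ ⊗ eⱼ - eⱼ ⊗ eᵢ)/√2` for `i < j`. -/
def antisym (d : ℕ) : Submodule ℂ (EuclideanSpace ℂ (Fin d × Fin d)) :=
  Submodule.span ℂ {w | ∃ i j : Fin d, i < j ∧
    w = ((Real.sqrt 2 : ℂ))⁻¹ •
      (tens (EuclideanSpace.single i 1) (EuclideanSpace.single j 1) -
       tens (EuclideanSpace.single j 1) (EuclideanSpace.single i 1))}

open scoped InnerProductSpace ComplexConjugate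

section Tensor

variable {ι κ α : Type*} [Fintype ι] [Fintype κ]

lemma inner_tens (x x' : EuclideanSpace ℂ ι) (y y' : EuclideanSpace ℂ κ) :
    ⟪tens x y, tens x' y'⟫_ℂ = ⟪x, x'⟫_ℂ * ⟪y, y'⟫_ℂ := by
  simp only [PiLp.inner_apply, RCLike.inner_apply, tens, Finset.sum_mul_sum,
    Fintype.sum_prod_type, map_mul]
  exact Finset.sum_congr rfl fun _ _ => Finset.sum_congr rfl fun _ _ => by ring

lemma norm_tens (x : EuclideanSpace ℂ ι) (y : EuclideanSpace ℂ κ) :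
    ‖tens x y‖ = ‖x‖ * ‖y‖ := by
  have h := inner_tens x x y y
  simp only [inner_self_eq_norm_sq_to_K] at h
  exact (sq_eq_sq₀ (norm_nonneg _) (by positivity)).mp (by rw [mul_pow]; exact_mod_cast h)

lemma norm_tens_sub_tens_swap_sq (x y : EuclideanSpace ℂ ι) :
    ‖tens x y - tens y x‖ ^ 2 = 2 * (‖x‖ ^ 2 * ‖y‖ ^ 2 - ‖⟪x, y⟫_ℂ‖ ^ 2) := by
  rw [@norm_sub_sq ℂ, inner_tens, ← inner_conj_symm y x, RCLike.mul_conj, norm_tens, norm_tens]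
  norm_cast
  ring

lemma norm_tens_sub_tens_sq_of_orthonormal {h f : α → EuclideanSpace ℂ ι}
    (hh : Orthonormal ℂ h) (hf : Orthonormal ℂ f) {a b : α} (hab : a ≠ b) :
    ‖tens (h a) (f b) - tens (h b) (f a)‖ ^ 2 = 2 := by
  rw [@norm_sub_sq ℂ, inner_tens, hh.inner_eq_zero hab, zero_mul, norm_tens, norm_tens,
    hh.1, hh.1, hf.1, hf.1]
  norm_num

lemma inner_tens_sub_tens_of_orthonormal {h f : α → EuclideanSpace ℂ ι}
    (hh : Orthonormal ℂ h) (hf : Orthonormal ℂ f) {a b : α} (hab : a ≠ b) :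
    ⟪tens (h a) (f b) - tens (h b) (f a), tens (h a) (f b)⟫_ℂ = 1 := by
  rw [inner_sub_left, inner_tens, inner_tens, hh.inner_eq_zero hab.symm,
    inner_self_eq_norm_sq_to_K, inner_self_eq_norm_sq_to_K, hh.1, hf.1]
  simp

end Tensor

section Projection

variable {𝕜 E : Type*} [RCLike 𝕜] [NormedAddCommGroup E] [InnerProductSpace 𝕜 E]
  {K : Submodule 𝕜 E} [K.HasOrthogonalProjection]

lemma norm_orthogonalProjectionOnto_le_of_sub_mem_orthogonal {z u : E} (h : z - u ∈ Kᗮ) :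
    ‖K.orthogonalProjectionOnto z‖ ≤ ‖u‖ := by
  have hzu : K.orthogonalProjectionOnto z = K.orthogonalProjectionOnto u := by
    rw [← sub_eq_zero, ← map_sub, Submodule.orthogonalProjectionOnto_eq_zero_iff]
    exact h
  rw [hzu]
  exact K.norm_orthogonalProjectionOnto_apply_le u

lemma norm_inner_le_norm_mul_norm_orthogonalProjectionOnto {u : E} (hu : u ∈ K) (z : E) :
    ‖⟪u, z⟫_𝕜‖ ≤ ‖u‖ * ‖K.orthogonalProjectionOnto z‖ := by
  have h := norm_inner_le_norm (𝕜 := 𝕜) (⟨u, hu⟩ : K) (K.orthogonalProjectionOnto z)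
  rwa [Submodule.inner_orthogonalProjectionOnto_eq_of_mem_left] at h

end Projection

lemma tens_add_tens_swap_mem_orthogonal_antisym {d : ℕ} (x y : EuclideanSpace ℂ (Fin d)) :
    tens x y + tens y x ∈ (antisym d)ᗮ := by
  rw [Submodule.mem_orthogonal]
  intro v hv
  induction hv using Submodule.span_induction with
  | mem w hw =>
    obtain ⟨i, j, -, rfl⟩ := hw
    simp only [inner_smul_left, inner_sub_left, inner_add_right, inner_tens,
      EuclideanSpace.inner_single_left, map_one, one_mul]
    ring
  | zero => exact inner_zero_left _
  | add u w _ _ hu hw => rw [inner_add_left, hu, hw, add_zero]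
  | smul c u _ hu => rw [inner_smul_left, hu, mul_zero]

lemma norm_orthogonalProjectionOnto_tens_sq_le {d : ℕ}
    {W : Submodule ℂ (EuclideanSpace ℂ (Fin d × Fin d))} (hW : W ≤ antisym d)
    (x y : EuclideanSpace ℂ (Fin d)) :
    ‖W.orthogonalProjectionOnto (tens x y)‖ ^ 2 ≤ ‖tens x y‖ ^ 2 / 2 := by
  have hsym : tens x y - (2 : ℂ)⁻¹ • (tens x y - tens y x) ∈ Wᗮ := by
    have e : tens x y - (2 : ℂ)⁻¹ • (tens x y - tens y x) =
        (2 : ℂ)⁻¹ • (tens x y + tens y x) := by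
      module
    rw [e]
    exact Submodule.smul_mem _ _ (Submodule.orthogonal_le hW
      (tens_add_tens_swap_mem_orthogonal_antisym x y))
  have hle := norm_orthogonalProjectionOnto_le_of_sub_mem_orthogonal hsym
  have hanti : ‖(2 : ℂ)⁻¹ • (tens x y - tens y x)‖ ^ 2 ≤ ‖tens x y‖ ^ 2 / 2 := by
    rw [norm_smul, mul_pow, norm_tens_sub_tens_swap_sq, norm_tens, norm_inv, Complex.norm_two]
    nlinarith [sq_nonneg ‖⟪x, y⟫_ℂ‖]
  exact (pow_le_pow_left₀ (norm_nonneg _) hle 2).trans hanti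

lemma half_le_norm_orthogonalProjectionOnto_tens_sq {ι α : Type*} [Fintype ι]
    {W : Submodule ℂ (EuclideanSpace ℂ (ι × ι))}
    {h f : α → EuclideanSpace ℂ ι} (hh : Orthonormal ℂ h) (hf : Orthonormal ℂ f)
    {a b : α} (hab : a ≠ b) (hW : tens (h a) (f b) - tens (h b) (f a) ∈ W) :
    1 / 2 ≤ ‖W.orthogonalProjectionOnto (tens (h a) (f b))‖ ^ 2 := by
  have hcs := norm_inner_le_norm_mul_norm_orthogonalProjectionOnto hW (tens (h a) (f b))
  rw [inner_tens_sub_tens_of_orthonormal hh hf hab, norm_one] at hcs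
  have hcs2 := pow_le_pow_left₀ zero_le_one hcs 2
  rw [one_pow, mul_pow, norm_tens_sub_tens_sq_of_orthonormal hh hf hab] at hcs2
  linarith

theorem sup_proj_subspace_antisym_eq_half_general (d : ℕ)
    (h f : Fin d → EuclideanSpace ℂ (Fin d))
    (hh : Orthonormal ℂ h) (hf : Orthonormal ℂ f)
    (S : Finset (Fin d × Fin d)) (hS : S.Nonempty) (hord : ∀ p ∈ S, p.1 < p.2)
    (W : Submodule ℂ (EuclideanSpace ℂ (Fin d × Fin d)))
    (hW : W = Submodule.span ℂ
      ((fun p : Fin d × Fin d => ((Real.sqrt 2 : ℂ))⁻¹ •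
        (tens (h p.1) (f p.2) - tens (h p.2) (f p.1))) '' S))
    (hWas : W ≤ antisym d) :
    sSup {t : ℝ | ∃ x y : EuclideanSpace ℂ (Fin d),
        ‖tens x y‖ = 1 ∧ t = ‖W.orthogonalProjectionOnto (tens x y)‖ ^ 2} = 1 / 2 := by
  obtain ⟨⟨a, b⟩, hp⟩ := hS
  have hab : a ≠ b := (hord _ hp).ne
  have hmem : tens (h a) (f b) - tens (h b) (f a) ∈ W := by
    have hgen : ((Real.sqrt 2 : ℂ))⁻¹ • (tens (h a) (f b) - tens (h b) (f a)) ∈ W :=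
      hW ▸ Submodule.subset_span ⟨(a, b), hp, rfl⟩
    have hsqrt : ((Real.sqrt 2 : ℂ)) ≠ 0 := by simp
    simpa [smul_smul, hsqrt] using W.smul_mem (Real.sqrt 2 : ℂ) hgen
  have hunit : ‖tens (h a) (f b)‖ = 1 := by rw [norm_tens, hh.1, hf.1, one_mul]
  have hupper : ∀ x y : EuclideanSpace ℂ (Fin d), ‖tens x y‖ = 1 →
      ‖W.orthogonalProjectionOnto (tens x y)‖ ^ 2 ≤ 1 / 2 := fun x y hxy => by
    simpa [hxy] using norm_orthogonalProjectionOnto_tens_sq_le hWas x y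
  refine IsGreatest.csSup_eq ⟨⟨h a, f b, hunit, ?_⟩, ?_⟩
  · exact le_antisymm (half_le_norm_orthogonalProjectionOnto_tens_sq hh hf hab hmem)
      (hupper _ _ hunit)
  · rintro t ⟨x, y, hxy, rfl⟩
    exact hupper x y hxy

/-- if `W` is a subspace of the antisymmetric subspace `H_as ⊂ ℂᵈ ⊗ ℂᵈ`, spanned
by antisymmetrized tensors `(h_{p₁} ⊗ f_{p₂} - h_{p₂} ⊗ f_{p₁})/√2` over a nonempty set of pairs
`p₁ < p₂`, built from orthonormal bases `{hᵢ}`, `{fᵢ}` of `ℂᵈ`, then the supremum over unit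
simple tensors `x ⊗ y` of `‖P_W(x ⊗ y)‖²` equals exactly `1/2`. -/
theorem sup_proj_subspace_antisym_eq_half (d : ℕ) (hd : 2 ≤ d)
    (h f : Fin d → EuclideanSpace ℂ (Fin d))
    (hh : Orthonormal ℂ h) (hf : Orthonormal ℂ f)
    (hbh : Submodule.span ℂ (Set.range h) = ⊤) (hbf : Submodule.span ℂ (Set.range f) = ⊤)
    (S : Finset (Fin d × Fin d)) (hS : S.Nonempty) (hord : ∀ p ∈ S, p.1 < p.2)
    (W : Submodule ℂ (EuclideanSpace ℂ (Fin d × Fin d)))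
    (hW : W = Submodule.span ℂ
      ((fun p : Fin d × Fin d => ((Real.sqrt 2 : ℂ))⁻¹ •
        (tens (h p.1) (f p.2) - tens (h p.2) (f p.1))) '' S))
    (hWas : W ≤ antisym d) :
    sSup {t : ℝ | ∃ x y : EuclideanSpace ℂ (Fin d),
        ‖tens x y‖ = 1 ∧ t = ‖W.orthogonalProjectionOnto (tens x y)‖ ^ 2} = 1 / 2 :=
  sup_proj_subspace_antisym_eq_half_general d h f hh hf S hS hord W hW hWas
end
end

section
/- Suppose S_p^min(N) ≥ C for some C > 0, and suppose there is a unit vector ψ in the range W₁ ⊗ W₂ of V ⊗ V̄ with S_p(Tr_{E₁E₂}|ψ⟩⟨ψ|) ≤ c where c < 2C. Then S_p^min(N ⊗ N̄) < S_p^min(N) + S_p^min(N̄), i.e., the pair (N, N̄) breaks additivity of the minimal output Rényi p-entropy. -/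
noncomputable section

/-- The reduced density matrix (partial trace over the second factor) of the pure state
`|ψ⟩⟨ψ|`. -/
def redMatrix {ι κ : Type*} [Fintype ι] [Fintype κ] (ψ : EuclideanSpace ℂ (ι × κ)) :
    Matrix ι ι ℂ :=
  Matrix.of fun i j => ∑ e : κ, ψ (i, e) * star (ψ (j, e))

theorem redMatrix_isHermitian {ι κ : Type*} [Fintype ι] [Fintype κ]
    (ψ : EuclideanSpace ℂ (ι × κ)) : (redMatrix ψ).IsHermitian := by
  ext i j
  simp [redMatrix, Matrix.IsHermitian, Matrix.conjTranspose_apply, mul_comm]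

/-- The Rényi `p`-entropy `S_p(Tr_κ |ψ⟩⟨ψ|) = (1/(1-p)) log₂ ∑ᵢ λᵢᵖ` of the reduced state of a
pure bipartite state `ψ`, computed from the eigenvalues of the reduced density matrix. -/
def renyiOut (p : ℝ) {ι κ : Type*} [Fintype ι] [Fintype κ] [DecidableEq ι]
    (ψ : EuclideanSpace ℂ (ι × κ)) : ℝ :=
  (1 / (1 - p)) * Real.logb 2 (∑ i, ((redMatrix_isHermitian ψ).eigenvalues i) ^ p)

/-- The rearrangement `η : (k₁ ⊗ f₁) ⊗ (k₂ ⊗ f₂) ↦ (k₁ ⊗ k₂) ⊗ (f₁ ⊗ f₂)`. -/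
def eta {α β γ δ : Type*} [Fintype α] [Fintype β] [Fintype γ] [Fintype δ]
    (ψ : EuclideanSpace ℂ ((α × β) × (γ × δ))) : EuclideanSpace ℂ ((α × γ) × (β × δ)) :=
  WithLp.toLp 2 (fun q => ψ ((q.1.1, q.2.1), (q.1.2, q.2.2)))

/-- Entrywise complex conjugation of a vector. -/
def starVec {ι : Type*} [Fintype ι] (ψ : EuclideanSpace ℂ ι) : EuclideanSpace ℂ ι :=
  WithLp.toLp 2 (fun i => star (ψ i))

/-! Entrywise conjugation maps `W̄` isometrically onto `W` and turns each reduced density matrix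
into its transpose, which has the same spectrum; hence `S_p^min(N̄) = S_p^min(N) ≥ C`, while the
witness `ψ` bounds `S_p^min(N ⊗ N̄)` by `c < 2C`. -/

section Conjugation

variable {ι κ : Type*} [Fintype ι] [Fintype κ]

theorem starVec_starVec (ψ : EuclideanSpace ℂ ι) : starVec (starVec ψ) = ψ :=
  PiLp.ext fun _ => star_star _

theorem norm_starVec (ψ : EuclideanSpace ℂ ι) : ‖starVec ψ‖ = ‖ψ‖ := by
  simp only [EuclideanSpace.norm_eq, starVec, norm_star]

theorem starVec_zero : starVec (0 : EuclideanSpace ℂ ι) = 0 :=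
  PiLp.ext fun _ => star_zero _

theorem starVec_add (x y : EuclideanSpace ℂ ι) : starVec (x + y) = starVec x + starVec y :=
  PiLp.ext fun _ => star_add _ _

theorem starVec_smul (a : ℂ) (x : EuclideanSpace ℂ ι) :
    starVec (a • x) = starRingEnd ℂ a • starVec x :=
  PiLp.ext fun _ => star_mul' _ _

theorem starVec_mem_of_mem_span_starVec {W : Submodule ℂ (EuclideanSpace ℂ ι)}
    {v : EuclideanSpace ℂ ι} (hv : v ∈ Submodule.span ℂ {v | ∃ w ∈ W, v = starVec w}) :
    starVec v ∈ W := by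
  induction hv using Submodule.span_induction with
  | mem x hx =>
    obtain ⟨w, hw, rfl⟩ := hx
    rwa [starVec_starVec]
  | zero => simpa only [starVec_zero] using W.zero_mem
  | add x y _ _ hx hy => simpa only [starVec_add] using W.add_mem hx hy
  | smul a x _ hx => simpa only [starVec_smul] using W.smul_mem _ hx

theorem mem_span_starVec_iff {W : Submodule ℂ (EuclideanSpace ℂ ι)} {v : EuclideanSpace ℂ ι} :
    v ∈ Submodule.span ℂ {v | ∃ w ∈ W, v = starVec w} ↔ starVec v ∈ W :=
  ⟨starVec_mem_of_mem_span_starVec,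
    fun hv => Submodule.subset_span ⟨starVec v, hv, (starVec_starVec v).symm⟩⟩

theorem redMatrix_starVec (ψ : EuclideanSpace ℂ (ι × κ)) :
    redMatrix (starVec ψ) = (redMatrix ψ).transpose := by
  ext i j
  simp only [redMatrix, starVec, PiLp.toLp_apply, Matrix.of_apply, Matrix.transpose_apply,
    star_star, mul_comm]

theorem renyiOut_starVec (p : ℝ) [DecidableEq ι] (ψ : EuclideanSpace ℂ (ι × κ)) :
    renyiOut p (starVec ψ) = renyiOut p ψ := by
  have h : (redMatrix_isHermitian (starVec ψ)).eigenvalues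
      = (redMatrix_isHermitian ψ).eigenvalues := by
    rw [Matrix.IsHermitian.eigenvalues_eq_eigenvalues_iff, redMatrix_starVec,
      Matrix.charpoly_transpose]
  simp only [renyiOut, h]

theorem renyiOut_values_span_starVec (p : ℝ) [DecidableEq ι]
    (W : Submodule ℂ (EuclideanSpace ℂ (ι × κ))) :
    {t : ℝ | ∃ w ∈ Submodule.span ℂ {v | ∃ w ∈ W, v = starVec w}, ‖w‖ = 1 ∧ t = renyiOut p w}
      = {t : ℝ | ∃ w ∈ W, ‖w‖ = 1 ∧ t = renyiOut p w} := by
  ext t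
  constructor
  · rintro ⟨v, hv, hvn, rfl⟩
    exact ⟨starVec v, mem_span_starVec_iff.mp hv, by rw [norm_starVec, hvn],
      (renyiOut_starVec p v).symm⟩
  · rintro ⟨w, hw, hwn, rfl⟩
    exact ⟨starVec w, mem_span_starVec_iff.mpr (by rwa [starVec_starVec]),
      by rw [norm_starVec, hwn], (renyiOut_starVec p w).symm⟩

end Conjugation

/-- The `0` accounts for `Real.sInf` being `0` on sets that are not bounded below. -/
theorem Real.sInf_le_max_of_mem {s : Set ℝ} {x : ℝ} (hx : x ∈ s) : sInf s ≤ max x 0 := by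
  by_cases hs : BddBelow s
  · exact (csInf_le hs hx).trans (le_max_left _ _)
  · rw [Real.sInf_of_not_bddBelow hs]
    exact le_max_right _ _

theorem additivity_breaking_general (dK dE : ℕ) (p C c : ℝ) (hC : 0 < C)
    (W Wbar : Submodule ℂ (EuclideanSpace ℂ (Fin dK × Fin dE)))
    (hWbar : Wbar = Submodule.span ℂ {v | ∃ w ∈ W, v = starVec w})
    (Wt : Submodule ℂ (EuclideanSpace ℂ ((Fin dK × Fin dE) × (Fin dK × Fin dE))))
    (hmin : C ≤ sInf {t : ℝ | ∃ w ∈ W, ‖w‖ = 1 ∧ t = renyiOut p w})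
    (hψ : ∃ ψ ∈ Wt, ‖ψ‖ = 1 ∧ renyiOut p (eta ψ) ≤ c)
    (hc : c < 2 * C) :
    sInf {t : ℝ | ∃ ψ ∈ Wt, ‖ψ‖ = 1 ∧ t = renyiOut p (eta ψ)} <
      sInf {t : ℝ | ∃ w ∈ W, ‖w‖ = 1 ∧ t = renyiOut p w} +
      sInf {t : ℝ | ∃ w ∈ Wbar, ‖w‖ = 1 ∧ t = renyiOut p w} := by
  obtain ⟨ψ, hψWt, hψn, hψc⟩ := hψ
  rw [hWbar, renyiOut_values_span_starVec]
  have hmem : renyiOut p (eta ψ) ∈ {t : ℝ | ∃ ψ ∈ Wt, ‖ψ‖ = 1 ∧ t = renyiOut p (eta ψ)} :=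
    ⟨ψ, hψWt, hψn, rfl⟩
  have hprod := (Real.sInf_le_max_of_mem hmem).trans (max_le_max_right 0 hψc)
  have hbound : max c 0 < 2 * C := max_lt hc (by positivity)
  linarith

/-- let `W = ran V` define the channel `N` and `W̄` (the conjugate subspace,
`ran V̄`) the conjugate channel `N̄`, and `𝒲 = W ⊗ W̄ = ran (V ⊗ V̄)`.  If `S_p^min(N) ≥ C > 0`
and some unit vector `ψ ∈ 𝒲` has `S_p(Tr_{E₁E₂}|ψ⟩⟨ψ|) ≤ c` with `c < 2C`, then
`S_p^min(N ⊗ N̄) < S_p^min(N) + S_p^min(N̄)`: the pair `(N, N̄)` breaks additivity of the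
minimal output Rényi `p`-entropy. -/
theorem additivity_breaking (dK dE dH : ℕ) (p C c : ℝ) (hp : 1 < p) (hC : 0 < C)
    (V : EuclideanSpace ℂ (Fin dH) →ₗᵢ[ℂ] EuclideanSpace ℂ (Fin dK × Fin dE))
    (W Wbar : Submodule ℂ (EuclideanSpace ℂ (Fin dK × Fin dE)))
    (hW : LinearMap.range V.toLinearMap = W)
    (hWbar : Wbar = Submodule.span ℂ {v | ∃ w ∈ W, v = starVec w})
    (Wt : Submodule ℂ (EuclideanSpace ℂ ((Fin dK × Fin dE) × (Fin dK × Fin dE))))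
    (hWt : Wt = Submodule.span ℂ {ψ | ∃ a ∈ W, ∃ b ∈ Wbar, ψ = tens a b})
    (hmin : C ≤ sInf {t : ℝ | ∃ w ∈ W, ‖w‖ = 1 ∧ t = renyiOut p w})
    (hψ : ∃ ψ ∈ Wt, ‖ψ‖ = 1 ∧ renyiOut p (eta ψ) ≤ c)
    (hc : c < 2 * C) :
    sInf {t : ℝ | ∃ ψ ∈ Wt, ‖ψ‖ = 1 ∧ t = renyiOut p (eta ψ)} <
      sInf {t : ℝ | ∃ w ∈ W, ‖w‖ = 1 ∧ t = renyiOut p w} +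
      sInf {t : ℝ | ∃ w ∈ Wbar, ‖w‖ = 1 ∧ t = renyiOut p w} :=
  additivity_breaking_general dK dE p C c hC W Wbar hWbar Wt hmin hψ hc
end
end

section
/- Let G ⊂ ℂ have cardinality 2d−1 and for λ ∈ ℂ set u_λ = Σ_{k=0}^{d−1} λᵏ e_k ∈ ℂᵈ. Then the set {u_λ ⊗ u_λ : λ ∈ G} is linearly independent, so L = span{u_λ ⊗ u_λ : λ ∈ G} has dimension 2d−1 and its orthogonal complement S ⊂ ℂᵈ ⊗ ℂᵈ has dimension (d−1)². -/
/-!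
The coordinate of `u_λ ⊗ u_λ` at `(j, k)` is `λ^(j+k)`, so reading one coordinate on each
antidiagonal `j + k = m`, `m < 2d - 1`, maps `u_λ ⊗ u_λ` to the Vandermonde row `(λ^m)_m`.
Distinct nodes give independent Vandermonde rows, hence the `u_λ ⊗ u_λ` are independent, and
the orthogonal complement has dimension `d² - (2d - 1) = (d - 1)²`.
-/

noncomputable section

/-- The vector `u_λ = (1, λ, λ², …, λ^{d-1}) = ∑_k λᵏ e_k ∈ ℂᵈ`. -/
def uVec (d : ℕ) (lam : ℂ) : EuclideanSpace ℂ (Fin d) :=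
  WithLp.toLp 2 (fun k => lam ^ (k : ℕ))

theorem linearIndependent_pow_of_card_le {ι K : Type*} [Field K] [Fintype ι] {v : ι → K}
    (hv : Function.Injective v) {n : ℕ} (hn : Fintype.card ι ≤ n) :
    LinearIndependent K (fun i (m : Fin n) => v i ^ (m : ℕ)) := by
  obtain e := Fintype.equivFin ι
  have hvdm : LinearIndependent K (Matrix.vandermonde (v ∘ e.symm)) :=
    Matrix.linearIndependent_rows_iff_isUnit.2 <| (Matrix.isUnit_iff_isUnit_det _).2 <|
      isUnit_iff_ne_zero.2 <| Matrix.det_vandermonde_ne_zero_iff.2 (hv.comp e.symm.injective)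
  refine .of_comp (LinearMap.funLeft K K (Fin.castLE hn)) ?_
  have hrestrict : LinearMap.funLeft K K (Fin.castLE hn) ∘ (fun i (m : Fin n) => v i ^ (m : ℕ)) =
      Matrix.vandermonde (v ∘ e.symm) ∘ e := by
    ext i m
    change v i ^ (Fin.castLE hn m : ℕ) = Matrix.vandermonde (v ∘ e.symm) (e i) m
    simp [Matrix.vandermonde_apply]
  rw [hrestrict]
  exact hvdm.comp e e.injective

def antidiagonalPoint (d : ℕ) (m : Fin (2 * d - 1)) : Fin d × Fin d :=
  (⟨min (m : ℕ) (d - 1), by omega⟩, ⟨m - min (m : ℕ) (d - 1), by omega⟩)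

lemma antidiagonalPoint_add (d : ℕ) (m : Fin (2 * d - 1)) :
    ((antidiagonalPoint d m).1 : ℕ) + (antidiagonalPoint d m).2 = m := by
  simp only [antidiagonalPoint]
  omega

lemma tens_uVec_self_apply (d : ℕ) (lam : ℂ) (p : Fin d × Fin d) :
    tens (uVec d lam) (uVec d lam) p = lam ^ ((p.1 : ℕ) + p.2) := by
  simp [tens, uVec, pow_add]

theorem linearIndependent_tens_uVec_self {d : ℕ} {G : Finset ℂ} (hG : G.card ≤ 2 * d - 1) :
    LinearIndependent ℂ (fun lam : G => tens (uVec d lam) (uVec d lam)) := by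
  let sample := LinearMap.funLeft ℂ ℂ (antidiagonalPoint d) ∘ₗ
    (WithLp.linearEquiv 2 ℂ (Fin d × Fin d → ℂ)).toLinearMap
  refine .of_comp sample ?_
  have hsample : sample ∘ (fun lam : G => tens (uVec d lam) (uVec d lam)) =
      fun (lam : G) (m : Fin (2 * d - 1)) => (lam : ℂ) ^ (m : ℕ) := by
    ext lam m
    simp [sample, tens_uVec_self_apply, antidiagonalPoint_add]
  rw [hsample]
  exact linearIndependent_pow_of_card_le Subtype.val_injective (by simpa using hG)

theorem parthasarathy_dimensions_general (d : ℕ) (G : Finset ℂ)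
    (hG : G.card = 2 * d - 1) :
    LinearIndependent ℂ (fun lam : G => tens (uVec d lam) (uVec d lam)) ∧
    Module.finrank ℂ
        (Submodule.span ℂ {w | ∃ lam ∈ G, w = tens (uVec d lam) (uVec d lam)}) = 2 * d - 1 ∧
    Module.finrank ℂ
        (Submodule.span ℂ {w | ∃ lam ∈ G, w = tens (uVec d lam) (uVec d lam)})ᗮ =
      (d - 1) ^ 2 := by
  set L := Submodule.span ℂ {w | ∃ lam ∈ G, w = tens (uVec d lam) (uVec d lam)}
  have hli := linearIndependent_tens_uVec_self (d := d) hG.le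
  have hL : Module.finrank ℂ L = 2 * d - 1 := by
    have hset : {w | ∃ lam ∈ G, w = tens (uVec d lam) (uVec d lam)} =
        Set.range (fun lam : G => tens (uVec d lam) (uVec d lam)) := by
      ext w
      simp [eq_comm]
    rw [← hG, ← Fintype.card_coe, ← finrank_span_eq_card hli, ← hset]
  have hsum := L.finrank_add_finrank_orthogonal
  rw [hL, finrank_euclideanSpace, Fintype.card_prod, Fintype.card_fin] at hsum
  refine ⟨hli, hL, ?_⟩
  rcases d with _ | k
  · simpa using hsum
  · rw [Nat.add_sub_cancel]
    have : (k + 1) * (k + 1) = k ^ 2 + (2 * k + 1) := by ring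
    omega

/-- for a set `G` of `2d-1` distinct complex numbers, the family
`{u_λ ⊗ u_λ : λ ∈ G}` is linearly independent, so `L = span{u_λ ⊗ u_λ : λ ∈ G}` has dimension
`2d-1`, and `S = L^⊥ ⊂ ℂᵈ ⊗ ℂᵈ` has dimension `(d-1)²`. -/
theorem parthasarathy_dimensions (d : ℕ) (hd : 2 ≤ d) (G : Finset ℂ)
    (hG : G.card = 2 * d - 1) :
    LinearIndependent ℂ (fun lam : G => tens (uVec d lam) (uVec d lam)) ∧
    Module.finrank ℂ
        (Submodule.span ℂ {w | ∃ lam ∈ G, w = tens (uVec d lam) (uVec d lam)}) = 2 * d - 1 ∧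
    Module.finrank ℂ
        (Submodule.span ℂ {w | ∃ lam ∈ G, w = tens (uVec d lam) (uVec d lam)})ᗮ =
      (d - 1) ^ 2 :=
  parthasarathy_dimensions_general d G hG
end
end

section
/- Parthasarathy's subspace S = L^⊥, where L = span{u_λ ⊗ u_λ : λ ∈ G} for 2d−1 distinct λ, is completely entangled: S contains no nonzero simple tensor x ⊗ y. -/
noncomputable section

/-! Identify `x ∈ ℂᵈ` with the polynomial `P_x = ∑ xⱼ Xʲ` of degree `< d`. Then
`⟪u_λ ⊗ u_λ, x ⊗ y⟫ = (P_x P_y)(λ̄)`, so `x ⊗ y ⊥ L` says that `P_x P_y`, of degree `≤ 2d - 2`,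
vanishes at the `2d - 1` points `λ̄`, `λ ∈ G`. Hence `P_x P_y = 0`, and since `ℂ[X]` is a domain,
`x = 0` or `y = 0`. -/

open Polynomial ComplexConjugate InnerProductSpace

theorem inner_tens_tens {ι κ : Type*} [Fintype ι] [Fintype κ] (a x : EuclideanSpace ℂ ι)
    (b y : EuclideanSpace ℂ κ) : ⟪tens a b, tens x y⟫_ℂ = ⟪a, x⟫_ℂ * ⟪b, y⟫_ℂ := by
  simp only [PiLp.inner_apply, RCLike.inner_apply, tens, Fintype.sum_prod_type, Finset.sum_mul_sum,
    map_mul]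
  refine Finset.sum_congr rfl fun i _ => Finset.sum_congr rfl fun j _ => ?_
  ring

theorem eval_ofFn {R : Type*} [CommSemiring R] [DecidableEq R] (n : ℕ) (v : Fin n → R) (z : R) :
    (ofFn n v).eval z = ∑ i, v i * z ^ (i : ℕ) := by
  simp [ofFn_eq_sum_monomial, eval_finsetSum]

theorem inner_uVec (d : ℕ) (lam : ℂ) (x : EuclideanSpace ℂ (Fin d)) :
    ⟪uVec d lam, x⟫_ℂ = (ofFn d x).eval (conj lam) := by
  simp [PiLp.inner_apply, uVec, eval_ofFn]

theorem ofFn_ofLp_eq_zero_iff {d : ℕ} (x : EuclideanSpace ℂ (Fin d)) : ofFn d x = 0 ↔ x = 0 := by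
  rw [map_eq_zero_iff _ (injective_ofFn d), WithLp.ofLp_eq_zero]

@[simp]
theorem tens_zero_left {ι κ : Type*} [Fintype ι] [Fintype κ] (y : EuclideanSpace ℂ κ) :
    tens (0 : EuclideanSpace ℂ ι) y = 0 := by
  ext; simp [tens]

@[simp]
theorem tens_zero_right {ι κ : Type*} [Fintype ι] [Fintype κ] (x : EuclideanSpace ℂ ι) :
    tens x (0 : EuclideanSpace ℂ κ) = 0 := by
  ext; simp [tens]

/-- Parthasarathy's subspace `S = L^⊥`, with
`L = span{u_λ ⊗ u_λ : λ ∈ G}` for a set `G` of `2d-1` distinct complex numbers, is completely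
entangled: it contains no nonzero simple tensor `x ⊗ y`. -/
theorem parthasarathy_completely_entangled (d : ℕ) (G : Finset ℂ)
    (hG : G.card = 2 * d - 1) (L : Submodule ℂ (EuclideanSpace ℂ (Fin d × Fin d)))
    (hL : L = Submodule.span ℂ {w | ∃ lam ∈ G, w = tens (uVec d lam) (uVec d lam)}) :
    ∀ x y : EuclideanSpace ℂ (Fin d), tens x y ∈ Lᗮ → tens x y = 0 := by
  intro x y hxy
  rcases Nat.eq_zero_or_pos d with rfl | hd
  · exact Subsingleton.elim _ _
  have hvanish : ∀ z ∈ G.image conj, (ofFn d x * ofFn d y).eval z = 0 := by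
    simp only [Finset.mem_image]
    rintro _ ⟨lam, hlam, rfl⟩
    have hmem : tens (uVec d lam) (uVec d lam) ∈ L := hL ▸ Submodule.subset_span ⟨lam, hlam, rfl⟩
    rw [eval_mul, ← inner_uVec, ← inner_uVec, ← inner_tens_tens]
    exact Submodule.inner_right_of_mem_orthogonal hmem hxy
  have hdeg : (ofFn d x * ofFn d y).natDegree < (G.image conj).card := by
    rw [Finset.card_image_of_injective _ (starRingEnd ℂ).injective, hG]
    have hx := ofFn_natDegree_lt hd x
    have hy := ofFn_natDegree_lt hd y
    calc _ ≤ (ofFn d x).natDegree + (ofFn d y).natDegree := natDegree_mul_le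
      _ < 2 * d - 1 := by omega
  rcases mul_eq_zero.1 (eq_zero_of_natDegree_lt_card_of_eval_eq_zero' _ _ hvanish hdeg) with h | h
  · simp [(ofFn_ofLp_eq_zero_iff x).1 h]
  · simp [(ofFn_ofLp_eq_zero_iff y).1 h]
end
end
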